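/- arXiv:1401.7096 — 4 statements merged into one kernel-verified Lean document; each statement's English description precedes it below -/
import Mathlib

section
/- The three 9×9 complex matrices σ₁ = diag(ω², 1, ω², 1, 1, 1, ω, 1, ω), σ₃ = diag(ω², ω², 1, 1, 1, ω, 1, ω, 1), and σ₂ = (1/3)·M, where M has rows (1,ω,ω,ω²,ω²,1,1,1,1), (ω,1,ω,1,1,1,ω²,1,ω²), (ω,ω,1,1,1,ω²,1,ω²,1), (ω²,1,1,1,ω²,1,ω,ω,1), (ω²,1,1,ω²,1,ω,1,1,ω), (1,1,ω²,1,ω,1,1,ω²,ω), (1,ω²,1,ω,1,1,1,ω,ω²), (1,1,ω²,ω,1,ω²,ω,1,1), (1,ω²,1,1,ω,ω,ω²,1,1), satisfy the braid group relations σ₁σ₂σ₁ = σ₂σ₁σ₂, σ₂σ₃σ₂ = σ₃σ₂σ₃, and σ₁σ₃ = σ₃σ₁; in particular they define a unitary representation of the braid group B₄ on ℂ⁹. -/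
open Matrix Complex

noncomputable section

/-- ω = e^{2πi/3}, a primitive third root of unity. -/
def ω : ℂ := Complex.exp (2 * Real.pi * Complex.I / 3)

/-- The image of the braid generator σ₁ on V_G^{DDDD}. -/
def sig1 : Matrix (Fin 9) (Fin 9) ℂ :=
  diagonal ![ω ^ 2, 1, ω ^ 2, 1, 1, 1, ω, 1, ω]

/-- The image of the braid generator σ₃ on V_G^{DDDD}. -/
def sig3 : Matrix (Fin 9) (Fin 9) ℂ :=
  diagonal ![ω ^ 2, ω ^ 2, 1, 1, 1, ω, 1, ω, 1]

/-- The image of the braid generator σ₂ on V_G^{DDDD}. -/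
def sig2 : Matrix (Fin 9) (Fin 9) ℂ := (1 / 3 : ℂ) •
  !![1, ω, ω, ω ^ 2, ω ^ 2, 1, 1, 1, 1;
     ω, 1, ω, 1, 1, 1, ω ^ 2, 1, ω ^ 2;
     ω, ω, 1, 1, 1, ω ^ 2, 1, ω ^ 2, 1;
     ω ^ 2, 1, 1, 1, ω ^ 2, 1, ω, ω, 1;
     ω ^ 2, 1, 1, ω ^ 2, 1, ω, 1, 1, ω;
     1, 1, ω ^ 2, 1, ω, 1, 1, ω ^ 2, ω;
     1, ω ^ 2, 1, ω, 1, 1, 1, ω, ω ^ 2;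
     1, 1, ω ^ 2, ω, 1, ω ^ 2, ω, 1, 1;
     1, ω ^ 2, 1, 1, ω, ω, ω ^ 2, 1, 1]

lemma hω3 : ω ^ 3 = 1 := by
  rw [ω, ← Complex.exp_nat_mul]
  norm_num
  rw [show (3:ℂ) * (2 * Real.pi * Complex.I / 3) = 2 * Real.pi * Complex.I by ring]
  exact Complex.exp_two_pi_mul_I

lemma hωne : ω ≠ 1 := by
  rw [ω, Ne, Complex.exp_eq_one_iff]
  rintro ⟨n, h⟩
  have h2 : (2:ℂ) * Real.pi * I ≠ 0 := by
    simp [Real.pi_ne_zero, Complex.I_ne_zero, Complex.ofReal_ne_zero]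
  have h4 : ((3 * n - 1 : ℤ) : ℂ) * (2 * Real.pi * I) = 0 := by
    push_cast; linear_combination -3 * h
  rcases mul_eq_zero.1 h4 with h5 | h5
  · have : (3 * n - 1 : ℤ) = 0 := by exact_mod_cast h5
    omega
  · exact h2 h5

lemma hω2 : ω ^ 2 = -ω - 1 := by
  have h := hω3
  have : (ω - 1) * (ω ^ 2 + ω + 1) = 0 := by linear_combination h
  rcases mul_eq_zero.1 this with h1 | h1
  · exact absurd (sub_eq_zero.1 h1) hωne
  · linear_combination h1

lemma hp4 : ω ^ 4 = ω := by rw [pow_succ, hω3, one_mul]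
lemma hp5 : ω ^ 5 = -ω - 1 := by rw [show (5:ℕ)=3+2 by rfl, pow_add, hω3, one_mul, hω2]
lemma hp6 : ω ^ 6 = 1 := by rw [show (6:ℕ)=3+3 by rfl, pow_add, hω3, one_mul]

lemma hωzero : ω ≠ 0 := by
  intro h
  have := hω3
  rw [h] at this
  norm_num at this

lemma hsω : star ω = ω ^ 2 := by
  have key : ω * star ω = 1 := by
    rw [Complex.star_def, ω, ← Complex.exp_conj, ← Complex.exp_add]
    have hc : (starRingEnd ℂ) (2 * (Real.pi:ℂ) * I / 3) = -(2 * (Real.pi:ℂ) * I / 3) := by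
      simp [_root_.map_div₀, _root_.map_mul, Complex.conj_I, Complex.conj_ofReal, _root_.map_ofNat]
      ring
    rw [show (2 * (Real.pi:ℂ) * I / 3 + (starRingEnd ℂ) (2 * (Real.pi:ℂ) * I / 3)) = 0 by
      rw [hc]; ring]
    exact Complex.exp_zero
  have key2 : ω * ω ^ 2 = 1 := by rw [← pow_succ']; exact hω3
  exact mul_left_cancel₀ hωzero (key.trans key2.symm)

section aux
variable {α : Type*} {m : ℕ}
lemma cons_val_five' (x : α) (u : Fin (m + 5) → α) :
    vecCons x u 5 = vecHead (vecTail (vecTail (vecTail (vecTail u)))) := rfl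
lemma cons_val_six' (x : α) (u : Fin (m + 6) → α) :
    vecCons x u 6 = vecHead (vecTail (vecTail (vecTail (vecTail (vecTail u))))) := rfl
lemma cons_val_seven' (x : α) (u : Fin (m + 7) → α) :
    vecCons x u 7 = vecHead (vecTail (vecTail (vecTail (vecTail (vecTail (vecTail u)))))) := rfl
lemma cons_val_eight' (x : α) (u : Fin (m + 8) → α) :
    vecCons x u 8 = vecHead (vecTail (vecTail (vecTail (vecTail (vecTail (vecTail (vecTail u))))))) := rfl
end aux

lemma f9_0 (h : 0 < 9) : (⟨0, h⟩ : Fin 9) = 0 := rfl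
lemma f9_1 (h : 1 < 9) : (⟨1, h⟩ : Fin 9) = 1 := rfl
lemma f9_2 (h : 2 < 9) : (⟨2, h⟩ : Fin 9) = 2 := rfl
lemma f9_3 (h : 3 < 9) : (⟨3, h⟩ : Fin 9) = 3 := rfl
lemma f9_4 (h : 4 < 9) : (⟨4, h⟩ : Fin 9) = 4 := rfl
lemma f9_5 (h : 5 < 9) : (⟨5, h⟩ : Fin 9) = 5 := rfl
lemma f9_6 (h : 6 < 9) : (⟨6, h⟩ : Fin 9) = 6 := rfl
lemma f9_7 (h : 7 < 9) : (⟨7, h⟩ : Fin 9) = 7 := rfl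
lemma f9_8 (h : 8 < 9) : (⟨8, h⟩ : Fin 9) = 8 := rfl

lemma hsω' : (starRingEnd ℂ) ω = ω ^ 2 := hsω

lemma one9 : (1 : Matrix (Fin 9) (Fin 9) ℂ) = !![1,0,0,0,0,0,0,0,0; 0,1,0,0,0,0,0,0,0;
    0,0,1,0,0,0,0,0,0; 0,0,0,1,0,0,0,0,0; 0,0,0,0,1,0,0,0,0; 0,0,0,0,0,1,0,0,0;
    0,0,0,0,0,0,1,0,0; 0,0,0,0,0,0,0,1,0; 0,0,0,0,0,0,0,0,1] := by
  ext i j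
  fin_cases i <;> fin_cases j <;> rfl

lemma sig1_eq : sig1 = !![ω^2,0,0,0,0,0,0,0,0; 0,1,0,0,0,0,0,0,0; 0,0,ω^2,0,0,0,0,0,0;
    0,0,0,1,0,0,0,0,0; 0,0,0,0,1,0,0,0,0; 0,0,0,0,0,1,0,0,0;
    0,0,0,0,0,0,ω,0,0; 0,0,0,0,0,0,0,1,0; 0,0,0,0,0,0,0,0,ω] := by
  ext i j
  fin_cases i <;> fin_cases j <;> rfl

lemma sig3_eq : sig3 = !![ω^2,0,0,0,0,0,0,0,0; 0,ω^2,0,0,0,0,0,0,0; 0,0,1,0,0,0,0,0,0;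
    0,0,0,1,0,0,0,0,0; 0,0,0,0,1,0,0,0,0; 0,0,0,0,0,ω,0,0,0;
    0,0,0,0,0,0,1,0,0; 0,0,0,0,0,0,0,ω,0; 0,0,0,0,0,0,0,0,1] := by
  ext i j
  fin_cases i <;> fin_cases j <;> rfl

lemma star_sig1 : star sig1 = !![ω,0,0,0,0,0,0,0,0; 0,1,0,0,0,0,0,0,0; 0,0,ω,0,0,0,0,0,0;
    0,0,0,1,0,0,0,0,0; 0,0,0,0,1,0,0,0,0; 0,0,0,0,0,1,0,0,0;
    0,0,0,0,0,0,ω^2,0,0; 0,0,0,0,0,0,0,1,0; 0,0,0,0,0,0,0,0,ω^2] := by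
  rw [sig1_eq]
  ext i j
  fin_cases i <;> fin_cases j <;>
  · simp only [f9_0, f9_1, f9_2, f9_3, f9_4, f9_5, f9_6, f9_7, f9_8,
      Matrix.smul_mul, Matrix.mul_smul, Matrix.smul_apply, Matrix.mul_apply,
      Matrix.star_apply,
      Fin.sum_univ_succ, Fin.sum_univ_zero, Matrix.cons_val_zero, Matrix.cons_val_one,
      Matrix.cons_val_two, Matrix.cons_val_three, Matrix.cons_val_four,
      cons_val_five', cons_val_six', cons_val_seven', cons_val_eight',
      Matrix.head_cons, Matrix.tail_cons, Matrix.cons_val_succ, Matrix.of_apply,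
      Matrix.vecHead, Matrix.vecTail, Function.comp,
      Complex.star_def, star_sub, star_neg, star_zero, star_one,
      _root_.map_mul, _root_.map_div₀, _root_.map_one, _root_.map_zero, _root_.map_ofNat,
      _root_.map_pow, _root_.map_sub, _root_.map_neg, hsω',
      smul_eq_mul, add_zero, mul_zero, zero_mul, mul_one, one_mul]
    try ring_nf
    try simp only [hω2, hω3, hp4, hp5, hp6]
    try ring_nf

lemma star_sig3 : star sig3 = !![ω,0,0,0,0,0,0,0,0; 0,ω,0,0,0,0,0,0,0; 0,0,1,0,0,0,0,0,0;
    0,0,0,1,0,0,0,0,0; 0,0,0,0,1,0,0,0,0; 0,0,0,0,0,ω^2,0,0,0;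
    0,0,0,0,0,0,1,0,0; 0,0,0,0,0,0,0,ω^2,0; 0,0,0,0,0,0,0,0,1] := by
  rw [sig3_eq]
  ext i j
  fin_cases i <;> fin_cases j <;>
  · simp only [f9_0, f9_1, f9_2, f9_3, f9_4, f9_5, f9_6, f9_7, f9_8,
      Matrix.smul_mul, Matrix.mul_smul, Matrix.smul_apply, Matrix.mul_apply,
      Matrix.star_apply,
      Fin.sum_univ_succ, Fin.sum_univ_zero, Matrix.cons_val_zero, Matrix.cons_val_one,
      Matrix.cons_val_two, Matrix.cons_val_three, Matrix.cons_val_four,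
      cons_val_five', cons_val_six', cons_val_seven', cons_val_eight',
      Matrix.head_cons, Matrix.tail_cons, Matrix.cons_val_succ, Matrix.of_apply,
      Matrix.vecHead, Matrix.vecTail, Function.comp,
      Complex.star_def, star_sub, star_neg, star_zero, star_one,
      _root_.map_mul, _root_.map_div₀, _root_.map_one, _root_.map_zero, _root_.map_ofNat,
      _root_.map_pow, _root_.map_sub, _root_.map_neg, hsω',
      smul_eq_mul, add_zero, mul_zero, zero_mul, mul_one, one_mul]
    try ring_nf
    try simp only [hω2, hω3, hp4, hp5, hp6]
    try ring_nf

set_option maxHeartbeats 4000000 in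
lemma star_sig2 : star sig2 = (1 / 3 : ℂ) •
  !![1, ω ^ 2, ω ^ 2, ω, ω, 1, 1, 1, 1;
     ω ^ 2, 1, ω ^ 2, 1, 1, 1, ω, 1, ω;
     ω ^ 2, ω ^ 2, 1, 1, 1, ω, 1, ω, 1;
     ω, 1, 1, 1, ω, 1, ω ^ 2, ω ^ 2, 1;
     ω, 1, 1, ω, 1, ω ^ 2, 1, 1, ω ^ 2;
     1, 1, ω, 1, ω ^ 2, 1, 1, ω, ω ^ 2;
     1, ω, 1, ω ^ 2, 1, 1, 1, ω ^ 2, ω;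
     1, 1, ω, ω ^ 2, 1, ω, ω ^ 2, 1, 1;
     1, ω, 1, 1, ω ^ 2, ω ^ 2, ω, 1, 1] := by
  rw [sig2]
  ext i j
  fin_cases i <;> fin_cases j <;>
  · simp only [f9_0, f9_1, f9_2, f9_3, f9_4, f9_5, f9_6, f9_7, f9_8,
      Matrix.smul_mul, Matrix.mul_smul, Matrix.smul_apply, Matrix.mul_apply,
      Matrix.star_apply,
      Fin.sum_univ_succ, Fin.sum_univ_zero, Matrix.cons_val_zero, Matrix.cons_val_one,
      Matrix.cons_val_two, Matrix.cons_val_three, Matrix.cons_val_four,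
      cons_val_five', cons_val_six', cons_val_seven', cons_val_eight',
      Matrix.head_cons, Matrix.tail_cons, Matrix.cons_val_succ, Matrix.of_apply,
      Matrix.vecHead, Matrix.vecTail, Function.comp,
      Complex.star_def, star_sub, star_neg, star_zero, star_one,
      _root_.map_mul, _root_.map_div₀, _root_.map_one, _root_.map_zero, _root_.map_ofNat,
      _root_.map_pow, _root_.map_sub, _root_.map_neg, hsω',
      smul_eq_mul, add_zero, mul_zero, zero_mul, mul_one, one_mul]
    try norm_num
    try ring_nf
    try simp only [hω2, hω3, hp4, hp5, hp6]
    try ring_nf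

set_option maxHeartbeats 4000000 in
lemma braid12 : sig1 * sig2 * sig1 = sig2 * sig1 * sig2 := by
  rw [sig1_eq, sig2]
  ext i j
  fin_cases i <;> fin_cases j <;>
  · simp only [f9_0, f9_1, f9_2, f9_3, f9_4, f9_5, f9_6, f9_7, f9_8,
      Matrix.smul_mul, Matrix.mul_smul, Matrix.smul_apply, Matrix.mul_apply,
      Fin.sum_univ_succ, Fin.sum_univ_zero, Matrix.cons_val_zero, Matrix.cons_val_one,
      Matrix.cons_val_two, Matrix.cons_val_three, Matrix.cons_val_four,
      cons_val_five', cons_val_six', cons_val_seven', cons_val_eight',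
      Matrix.head_cons, Matrix.tail_cons, Matrix.cons_val_succ, Matrix.of_apply,
      smul_eq_mul, add_zero]
    ring_nf
    simp only [hω2, hω3, hp4, hp5, hp6]
    ring_nf

set_option maxHeartbeats 4000000 in
lemma braid23 : sig2 * sig3 * sig2 = sig3 * sig2 * sig3 := by
  rw [sig3_eq, sig2]
  ext i j
  fin_cases i <;> fin_cases j <;>
  · simp only [f9_0, f9_1, f9_2, f9_3, f9_4, f9_5, f9_6, f9_7, f9_8,
      Matrix.smul_mul, Matrix.mul_smul, Matrix.smul_apply, Matrix.mul_apply,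
      Fin.sum_univ_succ, Fin.sum_univ_zero, Matrix.cons_val_zero, Matrix.cons_val_one,
      Matrix.cons_val_two, Matrix.cons_val_three, Matrix.cons_val_four,
      cons_val_five', cons_val_six', cons_val_seven', cons_val_eight',
      Matrix.head_cons, Matrix.tail_cons, Matrix.cons_val_succ, Matrix.of_apply,
      smul_eq_mul, add_zero]
    ring_nf
    simp only [hω2, hω3, hp4, hp5, hp6]
    ring_nf

set_option maxHeartbeats 4000000 in
lemma braid13 : sig1 * sig3 = sig3 * sig1 := by
  rw [sig1_eq, sig3_eq]
  ext i j
  fin_cases i <;> fin_cases j <;>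
  · simp only [f9_0, f9_1, f9_2, f9_3, f9_4, f9_5, f9_6, f9_7, f9_8,
      Matrix.mul_apply,
      Fin.sum_univ_succ, Fin.sum_univ_zero, Matrix.cons_val_zero, Matrix.cons_val_one,
      Matrix.cons_val_two, Matrix.cons_val_three, Matrix.cons_val_four,
      cons_val_five', cons_val_six', cons_val_seven', cons_val_eight',
      Matrix.head_cons, Matrix.tail_cons, Matrix.cons_val_succ, Matrix.of_apply,
      add_zero]
    try ring_nf

set_option maxHeartbeats 4000000 in
lemma unit1 : sig1 * star sig1 = 1 := by
  rw [star_sig1, sig1_eq, one9]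
  ext i j
  fin_cases i <;> fin_cases j <;>
  · simp only [f9_0, f9_1, f9_2, f9_3, f9_4, f9_5, f9_6, f9_7, f9_8,
      Matrix.mul_apply,
      Fin.sum_univ_succ, Fin.sum_univ_zero, Matrix.cons_val_zero, Matrix.cons_val_one,
      Matrix.cons_val_two, Matrix.cons_val_three, Matrix.cons_val_four,
      cons_val_five', cons_val_six', cons_val_seven', cons_val_eight',
      Matrix.head_cons, Matrix.tail_cons, Matrix.cons_val_succ, Matrix.of_apply,
      add_zero]
    try norm_num
    try ring_nf
    try simp only [hω2, hω3, hp4, hp5, hp6]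
    try ring_nf

set_option maxHeartbeats 4000000 in
lemma unit3 : sig3 * star sig3 = 1 := by
  rw [star_sig3, sig3_eq, one9]
  ext i j
  fin_cases i <;> fin_cases j <;>
  · simp only [f9_0, f9_1, f9_2, f9_3, f9_4, f9_5, f9_6, f9_7, f9_8,
      Matrix.mul_apply,
      Fin.sum_univ_succ, Fin.sum_univ_zero, Matrix.cons_val_zero, Matrix.cons_val_one,
      Matrix.cons_val_two, Matrix.cons_val_three, Matrix.cons_val_four,
      cons_val_five', cons_val_six', cons_val_seven', cons_val_eight',
      Matrix.head_cons, Matrix.tail_cons, Matrix.cons_val_succ, Matrix.of_apply,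
      add_zero]
    try norm_num
    try ring_nf
    try simp only [hω2, hω3, hp4, hp5, hp6]
    try ring_nf

set_option maxHeartbeats 4000000 in
lemma unit2 : sig2 * star sig2 = 1 := by
  rw [star_sig2, sig2, one9]
  ext i j
  fin_cases i <;> fin_cases j <;>
  · simp only [f9_0, f9_1, f9_2, f9_3, f9_4, f9_5, f9_6, f9_7, f9_8,
      Matrix.smul_mul, Matrix.mul_smul, Matrix.smul_apply, Matrix.mul_apply,
      Fin.sum_univ_succ, Fin.sum_univ_zero, Matrix.cons_val_zero, Matrix.cons_val_one,
      Matrix.cons_val_two, Matrix.cons_val_three, Matrix.cons_val_four,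
      cons_val_five', cons_val_six', cons_val_seven', cons_val_eight',
      Matrix.head_cons, Matrix.tail_cons, Matrix.cons_val_succ, Matrix.of_apply,
      smul_eq_mul, add_zero]
    try norm_num
    try ring_nf
    try simp only [hω2, hω3, hp4, hp5, hp6]
    try ring_nf

/-- The matrices σ₁, σ₂, σ₃ satisfy the braid relations of B₄ and are unitary,
hence define a unitary representation of the braid group B₄ on ℂ⁹. -/
theorem stmt0 :
    sig1 * sig2 * sig1 = sig2 * sig1 * sig2 ∧
    sig2 * sig3 * sig2 = sig3 * sig2 * sig3 ∧
    sig1 * sig3 = sig3 * sig1 ∧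
    sig1 ∈ unitary (Matrix (Fin 9) (Fin 9) ℂ) ∧
    sig2 ∈ unitary (Matrix (Fin 9) (Fin 9) ℂ) ∧
    sig3 ∈ unitary (Matrix (Fin 9) (Fin 9) ℂ) := by
  refine ⟨braid12, braid23, braid13, ?_, ?_, ?_⟩
  · exact Matrix.mem_unitaryGroup_iff.mpr unit1
  · exact Matrix.mem_unitaryGroup_iff.mpr unit2
  · exact Matrix.mem_unitaryGroup_iff.mpr unit3
end
end

section
/- Let e₁,…,e₉ be the standard basis of ℂ⁹. The 3-dimensional subspace W of ℂ⁹ spanned by the vectors e₄ − e₅, e₈ − e₆, and e₇ − e₉ is invariant under each of the three 9×9 matrices σ₁ = diag(ω², 1, ω², 1, 1, 1, ω, 1, ω), σ₃ = diag(ω², ω², 1, 1, 1, ω, 1, ω, 1), and σ₂ = (1/3)·M, where M has rows (1,ω,ω,ω²,ω²,1,1,1,1), (ω,1,ω,1,1,1,ω²,1,ω²), (ω,ω,1,1,1,ω²,1,ω²,1), (ω²,1,1,1,ω²,1,ω,ω,1), (ω²,1,1,ω²,1,ω,1,1,ω), (1,1,ω²,1,ω,1,1,ω²,ω), (1,ω²,1,ω,1,1,1,ω,ω²),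 (1,1,ω²,ω,1,ω²,ω,1,1), (1,ω²,1,1,ω,ω,ω²,1,1). -/
/-!
W is spanned by the differences e₄ − e₅, e₈ − e₆, e₇ − e₉, so it suffices to check these
generators. The diagonal σ₁ and σ₃ have equal entries at the two positions of each difference,
which is therefore an eigenvector. Under σ₂ each difference goes to a difference of two columns,
which is an explicit combination of the generators; these identities hold for ω an
indeterminate, without using ω³ = 1.
-/

open Matrix Complex

noncomputable section

/-- The standard basis vector e_i (1-indexed i corresponds to `e (i-1)`) of ℂ⁹. -/
def e (i : Fin 9) : Fin 9 → ℂ := Pi.single i 1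

/-- The subspace W spanned by e₄ − e₅, e₈ − e₆, e₇ − e₉ (1-indexed). -/
def W : Submodule ℂ (Fin 9 → ℂ) :=
  Submodule.span ℂ {e 3 - e 4, e 7 - e 5, e 6 - e 8}

section

variable {n R : Type*} [Fintype n] [CommRing R]

theorem mulVec_mem_span_of_forall_mem {s : Set (n → R)} (A : Matrix n n R)
    (h : ∀ u ∈ s, A *ᵥ u ∈ Submodule.span R s) :
    ∀ v ∈ Submodule.span R s, A *ᵥ v ∈ Submodule.span R s := fun _ hv =>
  (Submodule.span_le (p := (Submodule.span R s).comap A.mulVecLin)).mpr h hv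

theorem diagonal_mulVec_single_sub_single [DecidableEq n] (d : n → R) {i j : n}
    (hij : d i = d j) :
    diagonal d *ᵥ (Pi.single i 1 - Pi.single j 1) = d i • (Pi.single i 1 - Pi.single j 1) := by
  rw [mulVec_sub, diagonal_mulVec_single, diagonal_mulVec_single, hij, smul_sub,
    ← smul_eq_mul, Pi.single_smul', Pi.single_smul']

end

theorem diagonal_mulVec_mem_W (d : Fin 9 → ℂ) (h34 : d 3 = d 4) (h75 : d 7 = d 5)
    (h68 : d 6 = d 8) : ∀ v ∈ W, diagonal d *ᵥ v ∈ W := by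
  have eigen {i j : Fin 9} (hij : d i = d j) : diagonal d *ᵥ (e i - e j) = d i • (e i - e j) :=
    diagonal_mulVec_single_sub_single d hij
  refine mulVec_mem_span_of_forall_mem _ ?_
  rintro u (rfl | rfl | rfl)
  all_goals
    rw [eigen ‹_›]
    exact W.smul_mem _ (Submodule.subset_span (by simp))

theorem sig2_mulVec_e3_sub_e4 :
    sig2 *ᵥ (e 3 - e 4) =
      (1 / 3 : ℂ) • ((1 - ω ^ 2) • (e 3 - e 4) + (ω - 1) • (e 7 - e 5) + (ω - 1) • (e 6 - e 8)) := by
  ext k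
  fin_cases k <;> simp [sig2, e, mulVec_sub] <;> ring

theorem sig2_mulVec_e7_sub_e5 :
    sig2 *ᵥ (e 7 - e 5) =
      (1 / 3 : ℂ) • ((ω - 1) • (e 3 - e 4) + (1 - ω ^ 2) • (e 7 - e 5) + (ω - 1) • (e 6 - e 8)) := by
  ext k
  fin_cases k <;> simp [sig2, e, mulVec_sub] <;> ring

theorem sig2_mulVec_e6_sub_e8 :
    sig2 *ᵥ (e 6 - e 8) =
      (1 / 3 : ℂ) • ((ω - 1) • (e 3 - e 4) + (ω - 1) • (e 7 - e 5) + (1 - ω ^ 2) • (e 6 - e 8)) := by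
  ext k
  fin_cases k <;> simp [sig2, e, mulVec_sub] <;> ring

theorem sig2_mulVec_mem_W : ∀ v ∈ W, sig2 *ᵥ v ∈ W := by
  have mem_W (a b c : ℂ) : a • (e 3 - e 4) + b • (e 7 - e 5) + c • (e 6 - e 8) ∈ W := by
    refine W.add_mem (W.add_mem ?_ ?_) ?_ <;>
      exact W.smul_mem _ (Submodule.subset_span (by simp))
  refine mulVec_mem_span_of_forall_mem _ ?_
  rintro u (rfl | rfl | rfl)
  · rw [sig2_mulVec_e3_sub_e4]; exact W.smul_mem _ (mem_W _ _ _)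
  · rw [sig2_mulVec_e7_sub_e5]; exact W.smul_mem _ (mem_W _ _ _)
  · rw [sig2_mulVec_e6_sub_e8]; exact W.smul_mem _ (mem_W _ _ _)

/-- The 3-dimensional subspace W of ℂ⁹ is invariant under σ₁, σ₂ and σ₃. -/
theorem stmt1 :
    (∀ v ∈ W, sig1.mulVec v ∈ W) ∧
    (∀ v ∈ W, sig2.mulVec v ∈ W) ∧
    (∀ v ∈ W, sig3.mulVec v ∈ W) :=
  ⟨diagonal_mulVec_mem_W _ rfl rfl rfl, sig2_mulVec_mem_W, diagonal_mulVec_mem_W _ rfl rfl rfl⟩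
end
end

section
/- Let σ₁ = diag(1, 1, ω), σ₃ = diag(1, ω, 1), and σ₂ be the 3×3 matrix with diagonal entries 1/2 + (√3/6)i and off-diagonal entries −1/2 + (√3/6)i, and set p = σ₁σ₂σ₁ and q = σ₃σ₂σ₃. Then p² = −[[0,1,0],[1,0,0],[0,0,1]] and q² = −[[0,0,1],[0,1,0],[1,0,0]]. -/
/-!
Since `√3 i = 2ω + 1`, the gate σ₂ has entries `(2 + ω)/3` on and `(ω - 1)/3` off the diagonal.
The entries of p² and q² are then polynomials in ω, which reduce to the claimed values using
nothing but `ω² + ω + 1 = 0`.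
-/

open Matrix Complex

noncomputable section

/-- The braiding gate σ₁ of the qutrit W-model. -/
def m1 : Matrix (Fin 3) (Fin 3) ℂ := diagonal ![1, 1, ω]

/-- The braiding gate σ₃ of the qutrit W-model. -/
def m3 : Matrix (Fin 3) (Fin 3) ℂ := diagonal ![1, ω, 1]

/-- The braiding gate σ₂ of the qutrit W-model. -/
def m2 : Matrix (Fin 3) (Fin 3) ℂ :=
  Matrix.of fun i j =>
    if i = j then (1 / 2 : ℂ) + (Real.sqrt 3 / 6 : ℝ) * Complex.I
    else -(1 / 2 : ℂ) + (Real.sqrt 3 / 6 : ℝ) * Complex.I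

section CubeRootOfUnity

variable {K : Type*} [Field K] [CharZero K] {w : K}

def m2Of (w : K) : Matrix (Fin 3) (Fin 3) K :=
  of fun i j => if i = j then (2 + w) / 3 else (w - 1) / 3

theorem sq_diagonal_last_mul_m2Of (hw : w ^ 2 + w + 1 = 0) :
    (diagonal ![1, 1, w] * m2Of w * diagonal ![1, 1, w]) ^ 2 =
      -!![0, 1, 0; 1, 0, 0; 0, 0, 1] := by
  ext i j
  fin_cases i <;> fin_cases j <;>
    simp only [sq, mul_apply, Fin.sum_univ_three, m2Of, of_apply, diagonal_apply,
      Matrix.neg_apply, Fin.zero_eta, Fin.mk_one, Fin.reduceFinMk, cons_val] <;> grind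

theorem sq_diagonal_middle_mul_m2Of (hw : w ^ 2 + w + 1 = 0) :
    (diagonal ![1, w, 1] * m2Of w * diagonal ![1, w, 1]) ^ 2 =
      -!![0, 0, 1; 0, 1, 0; 1, 0, 0] := by
  ext i j
  fin_cases i <;> fin_cases j <;>
    simp only [sq, mul_apply, Fin.sum_univ_three, m2Of, of_apply, diagonal_apply,
      Matrix.neg_apply, Fin.zero_eta, Fin.mk_one, Fin.reduceFinMk, cons_val] <;> grind

end CubeRootOfUnity

theorem ω_eq : ω = -(1 / 2) + (√3 / 2 : ℝ) * I := by
  have hθ : 2 * Real.pi * I / 3 = ((Real.pi - Real.pi / 3 : ℝ) : ℂ) * I := by push_cast; ring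
  rw [ω, hθ, exp_mul_I, ← ofReal_cos, ← ofReal_sin, Real.cos_pi_sub, Real.sin_pi_sub,
    Real.cos_pi_div_three, Real.sin_pi_div_three]
  push_cast
  ring

theorem ω_sq_add_ω_add_one : ω ^ 2 + ω + 1 = 0 := by
  have h3 : ((√3 : ℝ) : ℂ) ^ 2 = 3 := by norm_cast; simp
  rw [ω_eq]
  push_cast
  linear_combination (-1 / 4 : ℂ) * h3 + (1 / 4 : ℂ) * (√3 : ℂ) ^ 2 * I_sq

theorem m2_eq_m2Of : m2 = m2Of ω := by
  ext i j
  simp only [m2, m2Of, of_apply, ω_eq]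
  split_ifs <;> push_cast <;> ring

/-- With p = σ₁σ₂σ₁ and q = σ₃σ₂σ₃, we have
p² = −[[0,1,0],[1,0,0],[0,0,1]] and q² = −[[0,0,1],[0,1,0],[1,0,0]]. -/
theorem stmt3 (p q : Matrix (Fin 3) (Fin 3) ℂ)
    (hp : p = m1 * m2 * m1) (hq : q = m3 * m2 * m3) :
    p ^ 2 = -(!![0, 1, 0; 1, 0, 0; 0, 0, 1] : Matrix (Fin 3) (Fin 3) ℂ) ∧
    q ^ 2 = -(!![0, 0, 1; 0, 1, 0; 1, 0, 0] : Matrix (Fin 3) (Fin 3) ℂ) := by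
  subst hp hq
  rw [m1, m3, m2_eq_m2Of]
  exact ⟨sq_diagonal_last_mul_m2Of ω_sq_add_ω_add_one,
    sq_diagonal_middle_mul_m2Of ω_sq_add_ω_add_one⟩
end
end

section
/- Let α, β be complex numbers with |α|² + |β|² = 1, and define sequences (αₙ), (βₙ), (bₙ) by α₀ = α, β₀ = β, and for n ≥ 1: αₙ = α_{n−1}/√(9 − 8|α_{n−1}|²), βₙ = 3β_{n−1}/√(9 − 8|α_{n−1}|²), and bₙ = 1 − 8|α_{n−1}|²/9. Then for every n ≥ 0: |αₙ|² = |α|² / ((1 − |α|²)·9ⁿ + |α|²), and for every n ≥ 1 the product b₁·b₂·⋯·bₙ equals |β|² + |α|²/9ⁿ. In particular, ∏_{i=1}^{n} bᵢ → |β|² and |αₙ|² → 0 (when |α| < 1) as n → ∞. -/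
/-!
Writing `A = ‖α‖²`, the squared moduli `xₙ = ‖aₙ‖²` obey `xₙ₊₁ = xₙ / (9 - 8 xₙ)`, a Möbius map
that becomes multiplication by `9` in the coordinate `1/x - 1`. Hence `xₙ = A / Dₙ` with
`Dₙ = (1 - A) 9ⁿ + A`, and since `Dₙ₊₁ = 9 Dₙ - 8 A` each factor is `cₙ₊₁ = 1 - 8 xₙ / 9 = Dₙ₊₁ / (9 Dₙ)`.
The product telescopes to `Dₙ / 9ⁿ = (1 - A) + A / 9ⁿ = ‖β‖² + A / 9ⁿ`.
Everything works for an arbitrary ratio `q ≥ 1` in place of `9`.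
-/

open Filter Finset

lemma norm_div_ofReal_sqrt_sq (z : ℂ) {t : ℝ} (ht : 0 ≤ t) :
    ‖z / (Real.sqrt t : ℂ)‖ ^ 2 = ‖z‖ ^ 2 / t := by
  rw [norm_div, Complex.norm_real, Real.norm_of_nonneg (Real.sqrt_nonneg t), div_pow,
    Real.sq_sqrt ht]

def geomDenom (q A : ℝ) (n : ℕ) : ℝ := (1 - A) * q ^ n + A

namespace geomDenom

variable {q A : ℝ}

@[simp] lemma zero (q A : ℝ) : geomDenom q A 0 = 1 := by simp [geomDenom]

lemma succ (q A : ℝ) (n : ℕ) :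
    geomDenom q A (n + 1) = q * geomDenom q A n - (q - 1) * A := by
  simp only [geomDenom, pow_succ]; ring

lemma one_le (hq : 1 ≤ q) (hA : A ≤ 1) (n : ℕ) : 1 ≤ geomDenom q A n := by
  have : 1 ≤ q ^ n := one_le_pow₀ hq
  unfold geomDenom; nlinarith

lemma pos (hq : 1 ≤ q) (hA : A ≤ 1) (n : ℕ) : 0 < geomDenom q A n :=
  one_pos.trans_le (one_le hq hA n)

lemma div_pow_eq (hq : q ≠ 0) (n : ℕ) : geomDenom q A n / q ^ n = (1 - A) + A / q ^ n := by
  unfold geomDenom; field_simp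

lemma div_succ (hq : 1 ≤ q) (hA : A ≤ 1) (n : ℕ) :
    A / geomDenom q A (n + 1) =
      A / geomDenom q A n / (q - (q - 1) * (A / geomDenom q A n)) := by
  have hD := (pos hq hA n).ne'
  rw [show q - (q - 1) * (A / geomDenom q A n) = geomDenom q A (n + 1) / geomDenom q A n by
    rw [succ]; field_simp, div_div_div_cancel_right₀ hD]

lemma one_sub_mul_div (hq : 1 ≤ q) (hA : A ≤ 1) (n : ℕ) :
    1 - (q - 1) * (A / geomDenom q A n) / q = geomDenom q A (n + 1) / (q * geomDenom q A n) := by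
  have hD := (pos hq hA n).ne'
  have hq0 : q ≠ 0 := by positivity
  rw [succ]; field_simp

lemma tendsto_div_atTop (hq : 1 < q) (hA : A < 1) :
    Tendsto (fun n => A / geomDenom q A n) atTop (nhds 0) := by
  refine tendsto_const_nhds.div_atTop ?_
  exact ((tendsto_pow_atTop_atTop_of_one_lt hq).const_mul_atTop (sub_pos.2 hA)).atTop_add
    tendsto_const_nhds

end geomDenom

theorem norm_sq_eq_div_geomDenom {q A : ℝ} (hq : 1 ≤ q) (hA : A ≤ 1) {a : ℕ → ℂ}
    (ha0 : ‖a 0‖ ^ 2 = A)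
    (ha : ∀ n, a (n + 1) = a n / (Real.sqrt (q - (q - 1) * ‖a n‖ ^ 2) : ℂ)) (n : ℕ) :
    ‖a n‖ ^ 2 = A / geomDenom q A n := by
  induction n with
  | zero => simp [ha0]
  | succ n ih =>
    have hle : A / geomDenom q A n ≤ 1 :=
      div_le_one_of_le₀ (by linarith [geomDenom.one_le hq hA n]) (geomDenom.pos hq hA n).le
    rw [ha, norm_div_ofReal_sqrt_sq _ (by rw [ih]; nlinarith), ih, geomDenom.div_succ hq hA]

theorem prod_Icc_eq_geomDenom_div_pow {q A : ℝ} (hq : 1 ≤ q) (hA : A ≤ 1) {x c : ℕ → ℝ}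
    (hx : ∀ n, x n = A / geomDenom q A n)
    (hc : ∀ n, c (n + 1) = 1 - (q - 1) * x n / q) (n : ℕ) :
    ∏ i ∈ Icc 1 n, c i = geomDenom q A n / q ^ n := by
  induction n with
  | zero => simp
  | succ n ih =>
    have hD := (geomDenom.pos hq hA n).ne'
    have hq0 : q ≠ 0 := by positivity
    rw [prod_Icc_succ_top (by omega), ih, hc, hx, geomDenom.one_sub_mul_div hq hA]
    field_simp
    ring

theorem stmt18_general (α β : ℂ) (hnorm : ‖α‖ ^ 2 + ‖β‖ ^ 2 = 1)
    (a : ℕ → ℂ) (c : ℕ → ℝ)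
    (ha0 : a 0 = α)
    (ha : ∀ n, a (n + 1) = a n / (Real.sqrt (9 - 8 * ‖a n‖ ^ 2) : ℂ))
    (hc : ∀ n, c (n + 1) = 1 - 8 * ‖a n‖ ^ 2 / 9) :
    (∀ n : ℕ, ‖a n‖ ^ 2 =
        ‖α‖ ^ 2 /
          ((1 - ‖α‖ ^ 2) * 9 ^ n + ‖α‖ ^ 2)) ∧
    (∀ n : ℕ, 1 ≤ n →
        ∏ i ∈ Finset.Icc 1 n, c i =
          ‖β‖ ^ 2 + ‖α‖ ^ 2 / 9 ^ n) ∧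
    Tendsto (fun n : ℕ => ∏ i ∈ Finset.Icc 1 n, c i) atTop
      (nhds (‖β‖ ^ 2)) ∧
    (‖α‖ < 1 →
      Tendsto (fun n : ℕ => ‖a n‖ ^ 2) atTop (nhds 0)) := by
  have hq : (1 : ℝ) ≤ 9 := by norm_num
  have hA : ‖α‖ ^ 2 ≤ 1 := by linarith [sq_nonneg ‖β‖]
  have hβ : ‖β‖ ^ 2 = 1 - ‖α‖ ^ 2 := by linarith
  have hx : ∀ n, ‖a n‖ ^ 2 = ‖α‖ ^ 2 / geomDenom 9 (‖α‖ ^ 2) n :=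
    norm_sq_eq_div_geomDenom hq hA (by rw [ha0]) (by norm_num [ha])
  have hprod : ∀ n, ∏ i ∈ Icc 1 n, c i = ‖β‖ ^ 2 + ‖α‖ ^ 2 / 9 ^ n := fun n => by
    rw [prod_Icc_eq_geomDenom_div_pow hq hA hx (by norm_num [hc]),
      geomDenom.div_pow_eq (by norm_num), hβ]
  refine ⟨hx, fun n _ => hprod n, ?_, fun hα => ?_⟩
  · simp_rw [hprod]
    simpa using tendsto_const_nhds.add <| tendsto_const_nhds.div_atTop <|
      tendsto_pow_atTop_atTop_of_one_lt (by norm_num : (1 : ℝ) < 9)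
  · simp_rw [hx]
    exact geomDenom.tendsto_div_atTop (by norm_num) (pow_lt_one₀ (norm_nonneg α) hα two_ne_zero)

/-- Quantitative content of the σₓ-measurement lemma: the closed forms for
|αₙ|² and for the running product b₁⋯bₙ, and their limits. -/
theorem stmt18 (α β : ℂ) (hnorm : ‖α‖ ^ 2 + ‖β‖ ^ 2 = 1)
    (a b : ℕ → ℂ) (c : ℕ → ℝ)
    (ha0 : a 0 = α) (hb0 : b 0 = β)
    (ha : ∀ n, a (n + 1) = a n / (Real.sqrt (9 - 8 * ‖a n‖ ^ 2) : ℂ))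
    (hb : ∀ n, b (n + 1) = 3 * b n / (Real.sqrt (9 - 8 * ‖a n‖ ^ 2) : ℂ))
    (hc : ∀ n, c (n + 1) = 1 - 8 * ‖a n‖ ^ 2 / 9) :
    (∀ n : ℕ, ‖a n‖ ^ 2 =
        ‖α‖ ^ 2 /
          ((1 - ‖α‖ ^ 2) * 9 ^ n + ‖α‖ ^ 2)) ∧
    (∀ n : ℕ, 1 ≤ n →
        ∏ i ∈ Finset.Icc 1 n, c i =
          ‖β‖ ^ 2 + ‖α‖ ^ 2 / 9 ^ n) ∧
    Tendsto (fun n : ℕ => ∏ i ∈ Finset.Icc 1 n, c i) atTop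
      (nhds (‖β‖ ^ 2)) ∧
    (‖α‖ < 1 →
      Tendsto (fun n : ℕ => ‖a n‖ ^ 2) atTop (nhds 0)) :=
  stmt18_general α β hnorm a c ha0 ha hc
end
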